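/- Every induced matching of the cross-composition graph G(S) having at least k = n + |𝒞| - n/3 + 1 edges saturates the vertex q. -/

import Mathlib

/-!
Suppose `q` is unsaturated. Then every edge of `M` either joins some `v_a` to `w_{S,a}`, or
belongs to a single block `S`: it meets `w_S` or some `w_{S,x}` and contains a common neighbour
of all the `w_{S,x}` (namely `w_S`, or a `p_i` with `S ∉ C_i`). Since `M` is induced, a block
carries at most one edge of the second kind, and none if it carries one of the first kind. If
`T` is the set of blocks carrying edges of the first kind, these edges saturate distinct `v_a`
with `a ∈ ⋃ T`, so `|M| ≤ min(n, 3|T|) + |𝒞| - |T| ≤ n + |𝒞| - n/3`.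
-/

open SimpleGraph

/-- `M` is a matching of `G`, viewed as a set of edges. -/
def MatchingEdges {V : Type*} (G : SimpleGraph V) (M : Set (Sym2 V)) : Prop :=
  M ⊆ G.edgeSet ∧ ∀ e ∈ M, ∀ f ∈ M, e ≠ f → ∀ v : V, v ∈ e → v ∉ f

/-- The set of `M`-saturated vertices. -/
def msat {V : Type*} (M : Set (Sym2 V)) : Set V := {v | ∃ e ∈ M, v ∈ e}

/-- `M` is an induced matching of `G`. -/
def InducedMatchingEdges {V : Type*} (G : SimpleGraph V) (M : Set (Sym2 V)) : Prop :=
  MatchingEdges G M ∧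
    ∀ u v : V, u ∈ msat M → v ∈ msat M → G.Adj u v → s(u, v) ∈ M

/-- The union `𝒞` of the families `C 1, ..., C t`. -/
def allSets (n t : ℕ) (C : Fin t → Finset (Finset (Fin n))) : Finset (Finset (Fin n)) :=
  Finset.univ.biUnion C

/-- Vertex type of the cross-composition graph: `Sum.inl a` is `v_a`;
`Sum.inr (Sum.inl (S, 0))` is the star center `w_S` and `Sum.inr (Sum.inl (S, 1))` is
the leaf `w_S^*`; `Sum.inr (Sum.inr (Sum.inl ⟨S, x⟩))` is the interface vertex `w_{S,x}`
(for `x ∈ S`); `Sum.inr (Sum.inr (Sum.inr none))` is `q` and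
`Sum.inr (Sum.inr (Sum.inr (some i)))` is `p_i`. -/
abbrev CCVert (n t : ℕ) (C : Fin t → Finset (Finset (Fin n))) : Type _ :=
  Fin n ⊕ (({S // S ∈ allSets n t C} × Fin 2) ⊕
    ((Σ S : {S // S ∈ allSets n t C}, {x : Fin n // x ∈ S.val}) ⊕ Option (Fin t)))

/-- The cross-composition graph `G(S)` (with `I` a star centered at `q`). -/
def CCGraph (n t : ℕ) (C : Fin t → Finset (Finset (Fin n))) :
    SimpleGraph (CCVert n t C) :=
  SimpleGraph.fromRel (fun a b =>
    match a, b with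
    -- v_a ~ w_{S,x} iff x = a
    | Sum.inl a, Sum.inr (Sum.inr (Sum.inl ⟨_, x⟩)) => (x : Fin n) = a
    -- w_S ~ w_S^*
    | Sum.inr (Sum.inl (S, _)), Sum.inr (Sum.inl (S', _)) => S = S'
    -- w_S ~ w_{S,x}
    | Sum.inr (Sum.inl (S, i)), Sum.inr (Sum.inr (Sum.inl ⟨S', _⟩)) => S = S' ∧ i = 0
    -- q ~ p_i
    | Sum.inr (Sum.inr (Sum.inr o)), Sum.inr (Sum.inr (Sum.inr o')) =>
        o = none ∨ o' = none
    -- p_i ~ w_{S,x} iff S ∉ C i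
    | Sum.inr (Sum.inr (Sum.inr (some i))), Sum.inr (Sum.inr (Sum.inl ⟨S, _⟩)) =>
        (S : Finset (Fin n)) ∉ C i
    | _, _ => False)

section InducedMatching

variable {V : Type*} {G : SimpleGraph V} {M : Set (Sym2 V)} {e f : Sym2 V}

theorem MatchingEdges.eq_of_mem_of_mem (hM : MatchingEdges G M) (he : e ∈ M) (hf : f ∈ M)
    {u : V} (hue : u ∈ e) (huf : u ∈ f) : e = f :=
  by_contra fun hne => hM.2 e he f hf hne u hue huf

theorem InducedMatchingEdges.eq_of_adj (hM : InducedMatchingEdges G M) (he : e ∈ M)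
    (hf : f ∈ M) {u u' : V} (hu : u ∈ e) (hu' : u' ∈ f) (hadj : G.Adj u u') : e = f := by
  have huu' : s(u, u') ∈ M := hM.2 u u' ⟨e, he, hu⟩ ⟨f, hf, hu'⟩ hadj
  exact (hM.1.eq_of_mem_of_mem huu' he (Sym2.mem_mk_left _ _) hu).symm.trans
    (hM.1.eq_of_mem_of_mem huu' hf (Sym2.mem_mk_right _ _) hu')

theorem InducedMatchingEdges.subsingleton_setOf_mem_adj_forall {ι : Type*}
    (hM : InducedMatchingEdges G M) (P : ι → V) (c : V) :
    {e ∈ M | (∃ h ∈ e, ∀ i, G.Adj h (P i)) ∧ (c ∈ e ∨ ∃ i, P i ∈ e)}.Subsingleton := by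
  rintro e ⟨he, ⟨h, hhe, hhP⟩, hce⟩ f ⟨hf, ⟨h', hh'f, hh'P⟩, hcf | ⟨j, hjf⟩⟩
  · rcases hce with hce | ⟨i, hie⟩
    · exact hM.1.eq_of_mem_of_mem he hf hce hcf
    · exact (hM.eq_of_adj hf he hh'f hie (hh'P i)).symm
  · exact hM.eq_of_adj he hf hhe hjf (hhP j)

end InducedMatching

namespace CCVert

variable {n t : ℕ} {C : Fin t → Finset (Finset (Fin n))}

def v (a : Fin n) : CCVert n t C := Sum.inl a

def w (S : {S // S ∈ allSets n t C}) : CCVert n t C := Sum.inr (Sum.inl (S, 0))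

def wStar (S : {S // S ∈ allSets n t C}) : CCVert n t C := Sum.inr (Sum.inl (S, 1))

def wx (S : {S // S ∈ allSets n t C}) (x : {x // x ∈ S.val}) : CCVert n t C :=
  Sum.inr (Sum.inr (Sum.inl ⟨S, x⟩))

def p (i : Fin t) : CCVert n t C := Sum.inr (Sum.inr (Sum.inr (some i)))

def q : CCVert n t C := Sum.inr (Sum.inr (Sum.inr none))

end CCVert

namespace CCGraph

open CCVert

variable {n t : ℕ} {C : Fin t → Finset (Finset (Fin n))}

theorem adj_w_wx (S : {S // S ∈ allSets n t C}) (y : {x // x ∈ S.val}) :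
    (CCGraph n t C).Adj (w S) (wx S y) := by
  simp [CCGraph, w, wx]

theorem adj_p_wx {i : Fin t} {S : {S // S ∈ allSets n t C}} (hS : S.val ∉ C i)
    (y : {x // x ∈ S.val}) : (CCGraph n t C).Adj (p i) (wx S y) := by
  simp [CCGraph, p, wx, hS]

def BlockEdge (S : {S // S ∈ allSets n t C}) (e : Sym2 (CCVert n t C)) : Prop :=
  (∃ h ∈ e, ∀ y, (CCGraph n t C).Adj h (wx S y)) ∧ (w S ∈ e ∨ ∃ y, wx S y ∈ e)

theorem blockEdge_w_wStar (S : {S // S ∈ allSets n t C}) : BlockEdge S s(w S, wStar S) :=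
  ⟨⟨w S, Sym2.mem_mk_left _ _, adj_w_wx S⟩, Or.inl (Sym2.mem_mk_left _ _)⟩

theorem blockEdge_w_wx (S : {S // S ∈ allSets n t C}) (x : {x // x ∈ S.val}) :
    BlockEdge S s(w S, wx S x) :=
  ⟨⟨w S, Sym2.mem_mk_left _ _, adj_w_wx S⟩, Or.inl (Sym2.mem_mk_left _ _)⟩

theorem blockEdge_p_wx {i : Fin t} {S : {S // S ∈ allSets n t C}} (hS : S.val ∉ C i)
    (x : {x // x ∈ S.val}) : BlockEdge S s(p i, wx S x) :=
  ⟨⟨p i, Sym2.mem_mk_left _ _, adj_p_wx hS⟩, Or.inr ⟨x, Sym2.mem_mk_right _ _⟩⟩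

theorem edge_eq_v_wx_or_blockEdge {e : Sym2 (CCVert n t C)}
    (he : e ∈ (CCGraph n t C).edgeSet) (hq : q ∉ e) :
    (∃ S x, e = s(v x.val, wx S x)) ∨ ∃ S, BlockEdge S e ∧ ∀ a, v a ∉ e := by
  induction e using Sym2.ind with | _ u u' =>
  rw [mem_edgeSet, CCGraph, fromRel_adj] at he
  obtain ⟨hne, hrel⟩ := he
  rcases u with a | (⟨S, i⟩ | (⟨S, x⟩ | (_ | i))) <;>
    rcases u' with a' | (⟨S', i'⟩ | (⟨S', x'⟩ | (_ | i'))) <;>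
    simp only [or_false, false_or, or_self, reduceCtorEq] at hrel
  all_goals try exact absurd (Sym2.mem_mk_left _ _) hq
  all_goals try exact absurd (Sym2.mem_mk_right _ _) hq
  · subst hrel
    exact .inl ⟨S', x', rfl⟩
  · obtain rfl : S = S' := hrel.elim id Eq.symm
    have hi : i ≠ i' := fun h => hne (h ▸ rfl)
    refine .inr ⟨S, ?_, by simp [v]⟩
    fin_cases i <;> fin_cases i'
    · exact absurd rfl hi
    · exact blockEdge_w_wStar S
    · exact Sym2.eq_swap ▸ blockEdge_w_wStar S
    · exact absurd rfl hi
  · obtain ⟨rfl, rfl⟩ := hrel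
    exact .inr ⟨S, blockEdge_w_wx S x', by simp [v]⟩
  · subst hrel
    exact .inl ⟨S, x, Sym2.eq_swap⟩
  · obtain ⟨rfl, rfl⟩ := hrel
    exact .inr ⟨S', Sym2.eq_swap ▸ blockEdge_w_wx S' x, by simp [v]⟩
  · exact .inr ⟨S, Sym2.eq_swap ▸ blockEdge_p_wx hrel x, by simp [v]⟩
  · exact .inr ⟨S', blockEdge_p_wx hrel x', by simp [v]⟩

open Classical in
noncomputable def matchedBlocks (M : Set (Sym2 (CCVert n t C))) :
    Finset {S // S ∈ allSets n t C} :=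
  Finset.univ.filter fun S => ∃ y, s(v y.val, wx S y) ∈ M

variable {M : Set (Sym2 (CCVert n t C))}

theorem notMem_matchedBlocks_of_blockEdge (hM : InducedMatchingEdges (CCGraph n t C) M)
    {S : {S // S ∈ allSets n t C}} {e : Sym2 (CCVert n t C)} (he : e ∈ M)
    (hS : BlockEdge S e) (hv : ∀ a, v a ∉ e) : S ∉ matchedBlocks M := by
  classical
  rintro hSM
  obtain ⟨y, hy⟩ := (Finset.mem_filter.mp hSM).2
  obtain ⟨h, hhe, hh⟩ := hS.1
  have hey := hM.eq_of_adj he hy hhe (Sym2.mem_mk_right _ _) (hh y)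
  exact hv y (hey ▸ Sym2.mem_mk_left _ _)

theorem ncard_add_card_matchedBlocks_le (hM : InducedMatchingEdges (CCGraph n t C) M)
    (hq : q ∉ msat M) :
    M.ncard + (matchedBlocks M).card ≤
      ((matchedBlocks M).biUnion Subtype.val).card + (allSets n t C).card := by
  classical
  set T := matchedBlocks M
  let labels := (T.biUnion Subtype.val).disjSum Tᶜ
  have hM_le : M.ncard ≤ labels.card := by
    rw [Set.ncard_eq_toFinset_card']
    refine Finset.card_le_card_of_forall_subsingleton
      (fun e => Sum.elim (fun a => v a ∈ e) (fun S => BlockEdge S e)) ?_ ?_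
    · intro e he
      rw [Set.mem_toFinset] at he
      rcases edge_eq_v_wx_or_blockEdge (hM.1.1 he) (fun hqe => hq ⟨e, he, hqe⟩) with
        ⟨S, x, rfl⟩ | ⟨S, hS, hv⟩
      · refine ⟨.inl x.val, Finset.inl_mem_disjSum.mpr ?_, Sym2.mem_mk_left _ _⟩
        exact Finset.mem_biUnion.mpr ⟨S, Finset.mem_filter.mpr ⟨Finset.mem_univ _, x, he⟩, x.2⟩
      · refine ⟨.inr S, Finset.inr_mem_disjSum.mpr ?_, hS⟩
        exact Finset.mem_compl.mpr (notMem_matchedBlocks_of_blockEdge hM he hS hv)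
    · rintro (a | S) -
      · rintro e ⟨he, hae⟩ f ⟨hf, haf⟩
        exact hM.1.eq_of_mem_of_mem (Set.mem_toFinset.mp he) (Set.mem_toFinset.mp hf) hae haf
      · rintro e ⟨he, hSe⟩ f ⟨hf, hSf⟩
        exact hM.subsingleton_setOf_mem_adj_forall (wx S) (w S)
          ⟨Set.mem_toFinset.mp he, hSe⟩ ⟨Set.mem_toFinset.mp hf, hSf⟩
  have hcompl : Tᶜ.card + T.card = (allSets n t C).card := by
    rw [Finset.card_compl_add_card, Fintype.card_coe]
  rw [Finset.card_disjSum] at hM_le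
  omega

end CCGraph

theorem large_induced_matching_saturates_q_general (n t : ℕ)
    (C : Fin t → Finset (Finset (Fin n)))
    (h3 : ∀ i, ∀ s ∈ C i, s.card = 3) :
    ∀ M : Set (Sym2 (CCVert n t C)), InducedMatchingEdges (CCGraph n t C) M →
      n + (allSets n t C).card - n / 3 + 1 ≤ M.ncard →
      (Sum.inr (Sum.inr (Sum.inr none)) : CCVert n t C) ∈ msat M := by
  intro M hM hcard
  by_contra hq
  have hcount := CCGraph.ncard_add_card_matchedBlocks_le hM hq
  set T := CCGraph.matchedBlocks M
  have hn : (T.biUnion Subtype.val).card ≤ n := by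
    simpa using Finset.card_le_univ (T.biUnion Subtype.val)
  have h3T : (T.biUnion Subtype.val).card ≤ T.card * 3 := by
    refine Finset.card_biUnion_le_card_mul _ _ _ fun S _ => ?_
    obtain ⟨i, -, hi⟩ := Finset.mem_biUnion.mp S.2
    exact (h3 i S hi).le
  omega

/-- Every induced matching of the cross-composition graph with at least
`k = n + |𝒞| - n/3 + 1` edges saturates the vertex `q`. -/
theorem large_induced_matching_saturates_q (n t m : ℕ) (hn3 : 3 ∣ n) (hn : 0 < n)
    (C : Fin t → Finset (Finset (Fin n)))
    (hm : ∀ i, (C i).card = m)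
    (h3 : ∀ i, ∀ s ∈ C i, s.card = 3)
    (hne : ∀ i j : Fin t, i ≠ j → C i ≠ C j) :
    ∀ M : Set (Sym2 (CCVert n t C)), InducedMatchingEdges (CCGraph n t C) M →
      n + (allSets n t C).card - n / 3 + 1 ≤ M.ncard →
      (Sum.inr (Sum.inr (Sum.inr none)) : CCVert n t C) ∈ msat M :=
  large_induced_matching_saturates_q_general n t C h3
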